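/- arXiv:1708.02154 — 3 statements merged into one kernel-verified Lean document; each statement's English description precedes it below -/
import Mathlib

section
/- For all nonnegative integers k₁ < k₂ and all reals 0 < x₁ < x₂, the 2×2 determinant I_{k₁}(x₁) I_{k₂}(x₂) − I_{k₂}(x₁) I_{k₁}(x₂) is strictly positive. -/
/-!
The determinant is positive exactly when `I_{k₂} / I_{k₁}` increases strictly on `(0, ∞)`, and this
quotient is a product of the ratios `I_{k+1} / I_k`, so it suffices that each of these increases.
Differentiating under the integral and integrating by parts against `sin (j φ)` give
`I_j' = (I_{j-1} + I_{j+1}) / 2` and `x (I_{j-1} - I_{j+1}) = 2 j I_j`. With them,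
`(I_{k+1} / I_k)' = W / (x I_k²)`, where `W = x (I_k I_{k+1}' - I_{k+1} I_k')` equals
`x (I_k² - I_{k+1}²) - (2k + 1) I_k I_{k+1}`; `W` vanishes at `0` and `W' = (2k + 1) I_k I_{k+1} / x`,
which is positive once `I_k > 0`. The latter follows by induction from `(x^{k+1} I_{k+1})' = x^{k+1} I_k`.
-/

noncomputable def besselI (j : ℤ) (x : ℝ) : ℝ :=
  (1 / Real.pi) * ∫ φ in (0:ℝ)..Real.pi, Real.exp (x * Real.cos φ) * Real.cos (j * φ)

open Real intervalIntegral Set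

theorem hasDerivAt_integral_exp_mul_cos_mul {g : ℝ → ℝ} (hg : Continuous g) (a b x : ℝ) :
    HasDerivAt (fun y => ∫ φ in a..b, exp (y * cos φ) * g φ)
      (∫ φ in a..b, exp (x * cos φ) * cos φ * g φ) x := by
  refine (hasDerivAt_integral_of_dominated_loc_of_deriv_le
    (F := fun y φ => exp (y * cos φ) * g φ) (F' := fun y φ => exp (y * cos φ) * cos φ * g φ)
    (bound := fun φ => exp (|x| + 1) * |g φ|) (Metric.ball_mem_nhds x one_pos)
    (.of_forall fun y => (by fun_prop : Continuous _).aestronglyMeasurable)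
    ((by fun_prop : Continuous _).intervalIntegrable _ _)
    (by fun_prop : Continuous _).aestronglyMeasurable ?_
    ((by fun_prop : Continuous _).intervalIntegrable _ _) ?_).2
  · refine .of_forall fun φ _ y hy => ?_
    have hy : |y| ≤ |x| + 1 := by
      have := abs_sub_abs_le_abs_sub y x
      rw [Metric.mem_ball, dist_eq] at hy
      linarith
    have hexp : y * cos φ ≤ |x| + 1 := by
      have := abs_cos_le_one φ
      calc y * cos φ ≤ |y| * |cos φ| := (le_abs_self _).trans (abs_mul _ _).le
        _ ≤ |x| + 1 := by nlinarith [abs_nonneg y, abs_nonneg (cos φ)]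
    rw [norm_mul, norm_mul, norm_of_nonneg (exp_pos _).le, Real.norm_eq_abs, Real.norm_eq_abs]
    calc exp (y * cos φ) * |cos φ| * |g φ| ≤ exp (|x| + 1) * 1 * |g φ| := by
          gcongr
          exact abs_cos_le_one φ
      _ = exp (|x| + 1) * |g φ| := by ring
  · exact .of_forall fun φ _ y _ => ((hasDerivAt_mul_const (cos φ)).exp).mul_const (g φ)

theorem continuous_exp_mul_cos_mul_cos (x : ℝ) (j : ℤ) :
    Continuous fun φ => exp (x * cos φ) * cos (j * φ) := by
  fun_prop

theorem hasDerivAt_besselI (j : ℤ) (x : ℝ) :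
    HasDerivAt (besselI j) ((besselI (j - 1) x + besselI (j + 1) x) / 2) x := by
  have h : HasDerivAt (besselI j)
      (1 / π * ∫ φ in 0..π, exp (x * cos φ) * cos φ * cos (j * φ)) x :=
    (hasDerivAt_integral_exp_mul_cos_mul (by fun_prop) 0 π x).const_mul (1 / π)
  refine h.congr_deriv ?_
  rw [besselI, besselI, ← mul_add, mul_div_assoc, ← integral_add
    ((continuous_exp_mul_cos_mul_cos x _).intervalIntegrable _ _)
    ((continuous_exp_mul_cos_mul_cos x _).intervalIntegrable _ _), ← integral_div]
  congr 1
  refine integral_congr fun φ _ => ?_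
  push_cast
  rw [sub_mul, add_mul, one_mul, cos_sub, cos_add]
  ring

theorem mul_besselI_sub_besselI (j : ℤ) (x : ℝ) :
    x * (besselI (j - 1) x - besselI (j + 1) x) = 2 * j * besselI j x := by
  have parts := integral_mul_deriv_eq_deriv_mul (a := 0) (b := π)
    (u := fun φ => sin (j * φ)) (v := fun φ => exp (x * cos φ))
    (fun φ _ => (hasDerivAt_const_mul (x := φ) (j : ℝ)).sin)
    (fun φ _ => ((hasDerivAt_cos φ).const_mul x).exp)
    (Continuous.intervalIntegrable (by fun_prop) _ _)
    (Continuous.intervalIntegrable (by fun_prop) _ _)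
  simp only [sin_int_mul_pi, mul_zero, sin_zero, zero_mul, sub_zero, zero_sub] at parts
  have hcos : ∀ φ, cos (((j - 1 : ℤ) : ℝ) * φ) - cos (((j + 1 : ℤ) : ℝ) * φ)
      = 2 * sin (j * φ) * sin φ := fun φ => by
    push_cast
    rw [sub_mul, add_mul, one_mul, cos_sub, cos_add]
    ring
  calc x * (besselI (j - 1) x - besselI (j + 1) x)
      = ∫ φ in 0..π, x / π *
          (exp (x * cos φ) * cos ((j - 1 : ℤ) * φ) - exp (x * cos φ) * cos ((j + 1 : ℤ) * φ)) := by
        rw [besselI, besselI, ← mul_sub, ← integral_sub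
          ((continuous_exp_mul_cos_mul_cos x _).intervalIntegrable _ _)
          ((continuous_exp_mul_cos_mul_cos x _).intervalIntegrable _ _), integral_const_mul]
        ring
    _ = -(2 / π) * ∫ φ in 0..π, sin (j * φ) * (exp (x * cos φ) * (x * -sin φ)) := by
        rw [← integral_const_mul]
        refine integral_congr fun φ _ => ?_
        simp only [← mul_sub, hcos]
        ring
    _ = 2 * j * besselI j x := by
        rw [parts, besselI, neg_mul_neg, ← integral_const_mul, ← integral_const_mul,
          ← integral_const_mul]
        refine integral_congr fun φ _ => ?_
        ring

theorem besselI_zero_of_ne_zero {j : ℤ} (hj : j ≠ 0) : besselI j 0 = 0 := by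
  simp [besselI, integral_comp_mul_left, hj, sin_int_mul_pi]

theorem besselI_zero_pos (x : ℝ) : 0 < besselI 0 x := by
  refine mul_pos (by positivity) (intervalIntegral_pos_of_pos_on
    ((continuous_exp_mul_cos_mul_cos x 0).intervalIntegrable _ _) (fun φ _ => ?_) pi_pos)
  simp [exp_pos]

@[fun_prop]
theorem continuous_besselI (j : ℤ) : Continuous (besselI j) :=
  continuous_iff_continuousAt.mpr fun x => (hasDerivAt_besselI j x).continuousAt

theorem pos_of_eq_zero_of_hasDerivAt_pos {f f' : ℝ → ℝ} {a x : ℝ} (hf : ContinuousOn f (Ici a))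
    (ha : f a = 0) (hf' : ∀ t, a < t → HasDerivAt f (f' t) t) (hpos : ∀ t, a < t → 0 < f' t)
    (hx : a < x) : 0 < f x := by
  have hmono : StrictMonoOn f (Ici a) :=
    strictMonoOn_of_hasDerivWithinAt_pos (convex_Ici a) hf
      (fun t ht => (hf' t (by simpa using ht)).hasDerivWithinAt)
      (fun t ht => hpos t (by simpa using ht))
  simpa [ha] using hmono self_mem_Ici hx.le hx

theorem hasDerivAt_pow_mul_besselI (k : ℕ) (x : ℝ) :
    HasDerivAt (fun t => t ^ (k + 1) * besselI (k + 1) t) (x ^ (k + 1) * besselI k x) x := by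
  refine ((hasDerivAt_pow (k + 1) x).mul (hasDerivAt_besselI (k + 1) x)).congr_deriv ?_
  have hrec := mul_besselI_sub_besselI (k + 1) x
  push_cast at hrec ⊢
  simp only [add_sub_cancel_right] at hrec ⊢
  linear_combination (-x ^ k / 2) * hrec

theorem besselI_pos (k : ℕ) {x : ℝ} (hx : 0 < x) : 0 < besselI k x := by
  induction k generalizing x with
  | zero => exact besselI_zero_pos x
  | succ k ih =>
    have h := pos_of_eq_zero_of_hasDerivAt_pos (by fun_prop) (by simp)
      (fun t _ => hasDerivAt_pow_mul_besselI k t)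
      (fun t ht => mul_pos (pow_pos ht _) (ih ht)) hx
    exact_mod_cast pos_of_mul_pos_right h (pow_pos hx _).le

noncomputable def besselWronskian (k : ℤ) (x : ℝ) : ℝ :=
  x * (besselI k x ^ 2 - besselI (k + 1) x ^ 2) - (2 * k + 1) * besselI k x * besselI (k + 1) x

theorem besselWronskian_zero (k : ℤ) : besselWronskian k 0 = 0 := by
  rcases eq_or_ne (k + 1) 0 with hk | hk
  · rw [besselWronskian, besselI_zero_of_ne_zero (by omega : k ≠ 0)]
    ring
  · rw [besselWronskian, besselI_zero_of_ne_zero hk]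
    ring

theorem hasDerivAt_besselWronskian (k : ℤ) {x : ℝ} (hx : x ≠ 0) :
    HasDerivAt (besselWronskian k)
      ((2 * k + 1) * besselI k x * besselI (k + 1) x / x) x := by
  have hu := hasDerivAt_besselI k x
  have hv := hasDerivAt_besselI (k + 1) x
  have hrec := mul_besselI_sub_besselI k x
  have hrec' := mul_besselI_sub_besselI (k + 1) x
  rw [add_sub_cancel_right] at hv hrec'
  refine (((hasDerivAt_id x).mul ((hu.pow 2).sub (hv.pow 2))).sub
    ((hu.const_mul (2 * (k : ℝ) + 1)).mul hv)).congr_deriv ?_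
  simp only [Pi.sub_apply, Pi.pow_apply, id]
  rw [eq_div_iff hx]
  push_cast at hrec' ⊢
  linear_combination (x * besselI k x - (2 * k + 1) * besselI (k + 1) x / 2) * hrec
    + (x * besselI (k + 1) x + (2 * k + 1) * besselI k x / 2) * hrec'

theorem besselWronskian_pos (k : ℕ) {x : ℝ} (hx : 0 < x) : 0 < besselWronskian k x :=
  pos_of_eq_zero_of_hasDerivAt_pos (by unfold besselWronskian; fun_prop) (besselWronskian_zero k)
    (fun t ht => hasDerivAt_besselWronskian k ht.ne') (fun t ht => by
      have := besselI_pos k ht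
      have : 0 < besselI (k + 1) t := by exact_mod_cast besselI_pos (k + 1) ht
      positivity) hx

theorem hasDerivAt_besselI_succ_div (k : ℤ) {x : ℝ} (hx : x ≠ 0) (hk : besselI k x ≠ 0) :
    HasDerivAt (fun t => besselI (k + 1) t / besselI k t)
      (besselWronskian k x / (x * besselI k x ^ 2)) x := by
  have hv := hasDerivAt_besselI (k + 1) x
  have hrec := mul_besselI_sub_besselI k x
  have hrec' := mul_besselI_sub_besselI (k + 1) x
  rw [add_sub_cancel_right] at hv hrec'
  refine (hv.div (hasDerivAt_besselI k x) hk).congr_deriv ?_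
  rw [besselWronskian, div_eq_div_iff (by positivity) (by positivity)]
  push_cast at hrec' ⊢
  linear_combination (-besselI k x ^ 2 * besselI (k + 1) x / 2) * hrec
    - (besselI k x ^ 3 / 2) * hrec'

theorem strictMonoOn_besselI_succ_div (k : ℕ) :
    StrictMonoOn (fun x => besselI (k + 1) x / besselI k x) (Ioi 0) := by
  have hderiv : ∀ x ∈ Ioi (0 : ℝ), HasDerivAt (fun t => besselI (k + 1) t / besselI k t)
      (besselWronskian k x / (x * besselI k x ^ 2)) x :=
    fun x hx => hasDerivAt_besselI_succ_div k (ne_of_gt hx) (besselI_pos k hx).ne'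
  refine strictMonoOn_of_hasDerivWithinAt_pos (convex_Ioi 0)
    (f' := fun x => besselWronskian k x / (x * besselI k x ^ 2))
    (fun x hx => (hderiv x hx).continuousAt.continuousWithinAt) (fun x hx => ?_) (fun x hx => ?_)
  · rw [interior_Ioi] at hx
    exact (hderiv x hx).hasDerivWithinAt
  · rw [interior_Ioi, mem_Ioi] at hx
    have := besselWronskian_pos k hx
    have := besselI_pos k hx
    positivity

theorem strictMonoOn_besselI_div {k₁ k₂ : ℕ} (hk : k₁ < k₂) :
    StrictMonoOn (fun x => besselI k₂ x / besselI k₁ x) (Ioi 0) := by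
  induction k₂, hk using Nat.le_induction with
  | base => exact_mod_cast strictMonoOn_besselI_succ_div k₁
  | succ m _ ih =>
    have hfactor : ∀ x ∈ Ioi (0 : ℝ), besselI (m + 1 : ℕ) x / besselI k₁ x
        = besselI (m + 1) x / besselI m x * (besselI m x / besselI k₁ x) := fun x hx => by
      rw [div_mul_div_cancel₀ (besselI_pos m hx).ne', Nat.cast_succ]
    intro x hx y hy hxy
    simp only [hfactor x hx, hfactor y hy]
    have : 0 < besselI (m + 1) x := by exact_mod_cast besselI_pos (m + 1) hx
    exact mul_lt_mul'' (strictMonoOn_besselI_succ_div m hx hy hxy) (ih hx hy hxy)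
      (div_pos this (besselI_pos m hx)).le (div_pos (besselI_pos m hx) (besselI_pos k₁ hx)).le

theorem besselI_two_by_two_det_pos (k₁ k₂ : ℕ) (hk : k₁ < k₂)
    (x₁ x₂ : ℝ) (hx₁ : 0 < x₁) (hx : x₁ < x₂) :
    0 < besselI k₁ x₁ * besselI k₂ x₂ - besselI k₂ x₁ * besselI k₁ x₂ := by
  have hx₂ : 0 < x₂ := hx₁.trans hx
  have hratio := strictMonoOn_besselI_div hk hx₁ hx₂ hx
  rw [div_lt_div_iff₀ (besselI_pos k₁ hx₁) (besselI_pos k₁ hx₂)] at hratio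
  linarith
end

section
/- For every m ∈ ℕ and R > 1 there is a constant C(R) > 0 such that for all reals x₁, w₂, …, w_m with |x₁| + |w₂| + ⋯ + |w_m| ≤ R, the sum over all strictly increasing tuples k = (k₁ < ⋯ < k_m) of nonnegative integers of |det(I_{k_j}(x_i))|², with x_i = x₁ + w_i for i ≥ 2 and w₁ = 0, is at most C(R). In particular this family of determinants forms an element of ℓ². -/
set_option maxHeartbeats 1000000
open MeasureTheory intervalIntegral

private lemma cosCont (n j : ℕ) :
    Continuous (fun φ : ℝ => Real.cos φ ^ n * Real.cos (j * φ)) := by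
  fun_prop

private lemma cosII (n j : ℕ) :
    IntervalIntegrable (fun φ : ℝ => Real.cos φ ^ n * Real.cos (j * φ))
      MeasureTheory.volume 0 Real.pi :=
  (cosCont n j).intervalIntegrable _ _

private lemma integral_cos_nat (j : ℕ) (hj : j ≠ 0) :
    (∫ φ in (0:ℝ)..Real.pi, Real.cos (j * φ)) = 0 := by
  have hj' : (j : ℝ) ≠ 0 := Nat.cast_ne_zero.2 hj
  rw [intervalIntegral.integral_comp_mul_left Real.cos hj']
  simp [integral_cos, Real.sin_nat_mul_pi]

private lemma cos_pow_orth : ∀ n : ℕ, ∀ j : ℕ, n < j →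
    (∫ φ in (0:ℝ)..Real.pi, Real.cos φ ^ n * Real.cos (j * φ)) = 0 := by
  intro n
  induction n with
  | zero =>
    intro j hj
    simpa using integral_cos_nat j (by omega)
  | succ n ih =>
    intro j hj
    have hj1 : 1 ≤ j := by omega
    have key : ∀ φ : ℝ, Real.cos φ ^ (n + 1) * Real.cos (j * φ)
        = Real.cos φ ^ n * Real.cos ((j + 1 : ℕ) * φ) / 2
          + Real.cos φ ^ n * Real.cos ((j - 1 : ℕ) * φ) / 2 := by
      intro φ
      have hc1 : ((j + 1 : ℕ) : ℝ) * φ = (j : ℝ) * φ + φ := by push_cast; ring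
      have hc2 : ((j - 1 : ℕ) : ℝ) * φ = (j : ℝ) * φ - φ := by
        rw [Nat.cast_sub hj1]; push_cast; ring
      rw [hc1, hc2, Real.cos_add, Real.cos_sub, pow_succ]
      ring
    rw [intervalIntegral.integral_congr (g := fun φ =>
        Real.cos φ ^ n * Real.cos ((j + 1 : ℕ) * φ) / 2
          + Real.cos φ ^ n * Real.cos ((j - 1 : ℕ) * φ) / 2)
        (fun φ _ => key φ)]
    rw [intervalIntegral.integral_add ((cosII n (j+1)).div_const 2)
        ((cosII n (j-1)).div_const 2),
      intervalIntegral.integral_div, intervalIntegral.integral_div,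
      ih (j + 1) (by omega), ih (j - 1) (by omega)]
    norm_num

-- coefficient
noncomputable def bc (j : ℕ) (x : ℝ) (n : ℕ) : ℝ :=
  (1 / Real.pi) * ∫ φ in (0:ℝ)..Real.pi,
    (x ^ n / n.factorial) * (Real.cos φ ^ n * Real.cos (j * φ))

private lemma exp_tsum (t : ℝ) : Real.exp t = ∑' n : ℕ, t ^ n / n.factorial := by
  rw [Real.exp_eq_exp_ℝ, NormedSpace.exp_eq_tsum_div]

private lemma besselI_eq_tsum (j : ℕ) (x : ℝ) :
    besselI (j : ℤ) x = ∑' n : ℕ, bc j x n := by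
  have hle : (0:ℝ) ≤ Real.pi := Real.pi_pos.le
  have hF : ∀ n : ℕ, Integrable
      (fun φ : ℝ => (x ^ n / n.factorial) * (Real.cos φ ^ n * Real.cos (j * φ)))
      (volume.restrict (Set.Ioc 0 Real.pi)) := by
    intro n
    apply Continuous.integrableOn_Ioc
    fun_prop
  have hnorm : ∀ n : ℕ,
      (∫ φ in Set.Ioc (0:ℝ) Real.pi,
        ‖(x ^ n / n.factorial) * (Real.cos φ ^ n * Real.cos (j * φ))‖)
        ≤ (|x| ^ n / n.factorial) * Real.pi := by
    intro n
    rw [← intervalIntegral.integral_of_le hle]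
    have h := intervalIntegral.norm_integral_le_of_norm_le_const
      (a := 0) (b := Real.pi) (C := |x| ^ n / n.factorial)
      (f := fun φ : ℝ => ‖(x ^ n / n.factorial) * (Real.cos φ ^ n * Real.cos (j * φ))‖) ?_
    · calc _ ≤ ‖∫ φ in (0:ℝ)..Real.pi,
            ‖(x ^ n / n.factorial) * (Real.cos φ ^ n * Real.cos (j * φ))‖‖ := by rw [Real.norm_eq_abs]; exact le_abs_self _
        _ ≤ |x| ^ n / n.factorial * |Real.pi - 0| := h
        _ = |x| ^ n / n.factorial * Real.pi := by rw [sub_zero, abs_of_nonneg hle]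
    · intro φ _
      rw [norm_norm, norm_mul, norm_mul, norm_div]
      have h1 : ‖Real.cos φ ^ n‖ ≤ 1 := by
        rw [norm_pow]
        exact pow_le_one₀ (norm_nonneg _) (by rw [Real.norm_eq_abs]; exact Real.abs_cos_le_one φ)
      have h2 : ‖Real.cos ((j:ℝ) * φ)‖ ≤ 1 := by
        rw [Real.norm_eq_abs]; exact Real.abs_cos_le_one _
      have h3 : ‖x ^ n‖ / ‖(n.factorial : ℝ)‖ = |x| ^ n / n.factorial := by
        rw [Real.norm_eq_abs, abs_pow, Real.norm_natCast]
      calc ‖x ^ n‖ / ‖(n.factorial : ℝ)‖ * (‖Real.cos φ ^ n‖ * ‖Real.cos ((j:ℝ) * φ)‖)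
          ≤ ‖x ^ n‖ / ‖(n.factorial : ℝ)‖ * (1 * 1) := by
            apply mul_le_mul_of_nonneg_left _ (by positivity)
            exact mul_le_mul h1 h2 (norm_nonneg _) zero_le_one
        _ = |x| ^ n / n.factorial := by rw [h3]; ring
  have hsum : Summable (fun n : ℕ => ∫ φ in Set.Ioc (0:ℝ) Real.pi,
      ‖(x ^ n / n.factorial) * (Real.cos φ ^ n * Real.cos (j * φ))‖) := by
    apply Summable.of_nonneg_of_le
      (fun n => integral_nonneg (fun φ => norm_nonneg _)) hnorm
    exact (Real.summable_pow_div_factorial |x|).mul_right _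
  have hswap := MeasureTheory.integral_tsum_of_summable_integral_norm hF hsum
  have hpt : ∀ φ : ℝ, (∑' n : ℕ,
      (x ^ n / n.factorial) * (Real.cos φ ^ n * Real.cos ((j:ℝ) * φ)))
      = Real.exp (x * Real.cos φ) * Real.cos ((j:ℝ) * φ) := by
    intro φ
    rw [exp_tsum (x * Real.cos φ), ← tsum_mul_right]
    congr 1; ext n; rw [mul_pow]; ring
  unfold besselI bc
  rw [tsum_mul_left]
  congr 1
  push_cast
  simp only [intervalIntegral.integral_of_le hle]
  rw [hswap]
  simp only [hpt]

private lemma bc_eq_zero (j : ℕ) (x : ℝ) {n : ℕ} (h : n < j) : bc j x n = 0 := by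
  unfold bc
  rw [intervalIntegral.integral_const_mul, cos_pow_orth n j h]
  ring

private lemma abs_bc_le (j : ℕ) (x : ℝ) (n : ℕ) :
    |bc j x n| ≤ |x| ^ n / n.factorial := by
  unfold bc
  have hle : (0:ℝ) ≤ Real.pi := Real.pi_pos.le
  have hpi : (0:ℝ) < Real.pi := Real.pi_pos
  rw [intervalIntegral.integral_const_mul, abs_mul, abs_mul]
  have hbnd : ∀ φ ∈ Set.uIoc (0:ℝ) Real.pi,
      ‖Real.cos φ ^ n * Real.cos ((j:ℝ) * φ)‖ ≤ 1 := by
    intro φ _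
    rw [norm_mul]
    have h1 : ‖Real.cos φ ^ n‖ ≤ 1 := by
      rw [norm_pow]
      exact pow_le_one₀ (norm_nonneg _) (by rw [Real.norm_eq_abs]; exact Real.abs_cos_le_one φ)
    have h2 : ‖Real.cos ((j:ℝ) * φ)‖ ≤ 1 := by
      rw [Real.norm_eq_abs]; exact Real.abs_cos_le_one _
    calc ‖Real.cos φ ^ n‖ * ‖Real.cos ((j:ℝ) * φ)‖ ≤ 1 * 1 :=
        mul_le_mul h1 h2 (norm_nonneg _) zero_le_one
      _ = 1 := one_mul 1
  have h : |∫ φ in (0:ℝ)..Real.pi, Real.cos φ ^ n * Real.cos ((j:ℝ) * φ)| ≤ Real.pi := by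
    have := intervalIntegral.norm_integral_le_of_norm_le_const hbnd
    rw [Real.norm_eq_abs] at this
    simpa [abs_of_nonneg hle] using this
  have e1 : |1 / Real.pi| = 1 / Real.pi := abs_of_pos (by positivity)
  have e2 : |x ^ n / (n.factorial : ℝ)| = |x| ^ n / n.factorial := by
    rw [abs_div, abs_pow, Nat.abs_cast]
  rw [e1, e2]
  calc 1 / Real.pi * (|x| ^ n / n.factorial *
        |∫ φ in (0:ℝ)..Real.pi, Real.cos φ ^ n * Real.cos ((j:ℝ) * φ)|)
      ≤ 1 / Real.pi * (|x| ^ n / n.factorial * Real.pi) := by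
        apply mul_le_mul_of_nonneg_left _ (by positivity)
        exact mul_le_mul_of_nonneg_left h (by positivity)
    _ = |x| ^ n / n.factorial := by
        rw [div_mul_eq_mul_div, one_mul, mul_div_assoc, div_self hpi.ne', mul_one]

private lemma abs_besselI_le (j : ℕ) {x R : ℝ} (hR : 1 ≤ R) (hx : |x| ≤ R) :
    |besselI (j : ℤ) x| ≤ Real.exp R * R ^ j / j.factorial := by
  have hR0 : (0:ℝ) ≤ R := le_trans zero_le_one hR
  have habs : ∀ n, |bc j x n| ≤ R ^ n / n.factorial := by
    intro n
    refine (abs_bc_le j x n).trans ?_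
    gcongr
  have hsumR : Summable (fun n : ℕ => R ^ n / n.factorial) :=
    Real.summable_pow_div_factorial R
  have hsumabs : Summable (fun n => |bc j x n|) :=
    Summable.of_nonneg_of_le (fun n => abs_nonneg _) habs hsumR
  have hsum : Summable (bc j x) := by
    have := hsumabs
    simp only [← Real.norm_eq_abs] at this
    exact this.of_norm
  rw [besselI_eq_tsum]
  have step1 : |∑' n, bc j x n| ≤ ∑' n, |bc j x n| := by
    simpa [Real.norm_eq_abs] using
      norm_tsum_le_tsum_norm (by simpa [Real.norm_eq_abs] using hsumabs : Summable fun n => ‖bc j x n‖)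
  refine step1.trans ?_
  rw [← Summable.sum_add_tsum_nat_add j hsumabs]
  have hz : (∑ i ∈ Finset.range j, |bc j x i|) = 0 := by
    apply Finset.sum_eq_zero
    intro i hi
    rw [bc_eq_zero j x (Finset.mem_range.1 hi), abs_zero]
  rw [hz, zero_add]
  have hbd : ∀ p : ℕ, |bc j x (p + j)| ≤ R ^ j / j.factorial * (R ^ p / p.factorial) := by
    intro p
    refine (habs (p + j)).trans ?_
    have hfac : (j.factorial * p.factorial : ℝ) ≤ ((p + j).factorial : ℝ) := by
      exact_mod_cast Nat.le_of_dvd (Nat.factorial_pos _)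
        (by rw [add_comm]; exact Nat.factorial_mul_factorial_dvd_factorial_add j p)
    have hnum : R ^ (p + j) = R ^ j * R ^ p := by rw [pow_add]; ring
    rw [hnum]
    rw [div_mul_div_comm]
    apply div_le_div_of_nonneg_left (by positivity) (by positivity) hfac
  have hsum2 : Summable (fun p : ℕ => R ^ j / j.factorial * (R ^ p / p.factorial)) :=
    hsumR.mul_left _
  have hsleft : Summable (fun p : ℕ => |bc j x (p + j)|) :=
    Summable.of_nonneg_of_le (fun p => abs_nonneg _) hbd hsum2
  calc (∑' p, |bc j x (p + j)|)
      ≤ ∑' p, R ^ j / j.factorial * (R ^ p / p.factorial) :=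
        Summable.tsum_le_tsum hbd hsleft hsum2
    _ = R ^ j / j.factorial * Real.exp R := by
        rw [tsum_mul_left, ← exp_tsum]
    _ = Real.exp R * R ^ j / j.factorial := by ring

private lemma abs_det_le {m : ℕ} (A : Matrix (Fin m) (Fin m) ℝ) (B : Fin m → ℝ)
    (hB0 : ∀ j, 0 ≤ B j) (h : ∀ i j, |A i j| ≤ B j) :
    |A.det| ≤ (m.factorial : ℝ) * ∏ j, B j := by
  rw [Matrix.det_apply]
  calc |∑ σ : Equiv.Perm (Fin m), Equiv.Perm.sign σ • ∏ i, A (σ i) i|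
      ≤ ∑ σ : Equiv.Perm (Fin m), |Equiv.Perm.sign σ • ∏ i, A (σ i) i| :=
        Finset.abs_sum_le_sum_abs _ _
    _ ≤ ∑ _σ : Equiv.Perm (Fin m), ∏ j, B j := by
        apply Finset.sum_le_sum
        intro σ _
        have hs : |Equiv.Perm.sign σ • ∏ i, A (σ i) i| = |∏ i, A (σ i) i| := by
          rcases Int.units_eq_one_or (Equiv.Perm.sign σ) with h1 | h1 <;> simp [h1]
        rw [hs, Finset.abs_prod]
        exact Finset.prod_le_prod (fun i _ => abs_nonneg _) (fun i _ => h (σ i) i)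
    _ = (m.factorial : ℝ) * ∏ j, B j := by
        rw [Finset.sum_const, Finset.card_univ, Fintype.card_perm, Fintype.card_fin,
          nsmul_eq_mul]

private lemma summable_pi_prod (g : ℕ → ℝ) (hg0 : ∀ n, 0 ≤ g n) (hg : Summable g) :
    ∀ m : ℕ, Summable (fun k : Fin m → ℕ => ∏ i, g (k i)) ∧
      (∑' k : Fin m → ℕ, ∏ i, g (k i)) = (∑' n, g n) ^ m := by
  intro m
  induction m with
  | zero =>
    constructor
    · exact Summable.of_finite
    · rw [tsum_eq_single (fun i => 0) (by intro k hk; exact absurd (Subsingleton.elim _ _) hk)]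
      simp
  | succ m ih =>
    obtain ⟨hs, ht⟩ := ih
    set e : ℕ × (Fin m → ℕ) ≃ (Fin (m + 1) → ℕ) := Fin.consEquiv (fun _ => ℕ) with he
    have hcomp : ∀ p : ℕ × (Fin m → ℕ),
        (∏ i, g ((e p) i)) = g p.1 * ∏ i, g (p.2 i) := by
      intro p
      rw [Fin.prod_univ_succ]
      simp [he]
    have hprod : Summable (fun p : ℕ × (Fin m → ℕ) => g p.1 * ∏ i, g (p.2 i)) :=
      Summable.mul_of_nonneg (f := g) (g := fun c : Fin m → ℕ => ∏ i, g (c i))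
        hg hs (fun n => hg0 n) (fun c => Finset.prod_nonneg fun i _ => hg0 _)
    constructor
    · rw [← e.summable_iff]
      exact hprod.congr (fun p => (hcomp p).symm)
    · calc (∑' k : Fin (m + 1) → ℕ, ∏ i, g (k i))
          = ∑' p : ℕ × (Fin m → ℕ), ∏ i, g ((e p) i) := (e.tsum_eq _).symm
        _ = ∑' p : ℕ × (Fin m → ℕ), g p.1 * ∏ i, g (p.2 i) := tsum_congr hcomp
        _ = ∑' b : ℕ, ∑' c : Fin m → ℕ, g b * ∏ i, g (c i) :=
            Summable.tsum_prod' hprod (fun b => hs.mul_left (g b))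
        _ = ∑' b : ℕ, g b * ∑' c : Fin m → ℕ, ∏ i, g (c i) := by
            apply tsum_congr; intro b; rw [tsum_mul_left]
        _ = (∑' n, g n) ^ (m + 1) := by
            rw [tsum_mul_right, ht, pow_succ]; ring

theorem besselI_det_l2_bound (m : ℕ) (R : ℝ) (hR : 1 < R) :
    ∃ C : ℝ, 0 < C ∧
      ∀ (x₁ : ℝ) (w : Fin m → ℝ), (∀ h : 0 < m, w ⟨0, h⟩ = 0) →
        |x₁| + ∑ i : Fin m, |w i| ≤ R →
        Summable (fun k : {k : Fin m → ℕ // StrictMono k} =>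
          |Matrix.det (Matrix.of fun i j : Fin m =>
            besselI (k.1 j) (x₁ + w i))| ^ 2) ∧
        ∑' k : {k : Fin m → ℕ // StrictMono k},
          |Matrix.det (Matrix.of fun i j : Fin m =>
            besselI (k.1 j) (x₁ + w i))| ^ 2 ≤ C := by
  classical
  have hR0 : (0:ℝ) < R := lt_trans one_pos hR
  set g : ℕ → ℝ := fun n => (R ^ n / n.factorial) ^ 2 with hgdef
  have hg0 : ∀ n, 0 ≤ g n := fun n => sq_nonneg _
  have hgsum : Summable g := by
    apply Summable.of_nonneg_of_le hg0 _ (Real.summable_pow_div_factorial (R ^ 2))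
    intro n
    have h1 : (1:ℝ) ≤ (n.factorial : ℝ) := Nat.one_le_cast.2 n.factorial_pos
    have h2 : ((n.factorial : ℝ)) ≤ ((n.factorial : ℝ)) ^ 2 :=
      le_self_pow₀ h1 two_ne_zero
    calc g n = (R ^ 2) ^ n / ((n.factorial : ℝ)) ^ 2 := by
          simp only [hgdef]; rw [div_pow, ← pow_mul, ← pow_mul, mul_comm n 2]
      _ ≤ (R ^ 2) ^ n / (n.factorial : ℝ) :=
          div_le_div_of_nonneg_left (by positivity) (by positivity) h2
  obtain ⟨hS, hT⟩ := summable_pi_prod g hg0 hgsum m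
  set T : ℝ := ∑' k : Fin m → ℕ, ∏ i, g (k i) with hTdef
  have hT0 : 0 ≤ T := tsum_nonneg (fun k => Finset.prod_nonneg fun i _ => hg0 _)
  set K : ℝ := ((m.factorial : ℝ) * Real.exp R ^ m) ^ 2 with hKdef
  have hK0 : 0 ≤ K := sq_nonneg _
  refine ⟨K * T + 1, by nlinarith, ?_⟩
  intro x₁ w _ hwsum
  have hx : ∀ i : Fin m, |x₁ + w i| ≤ R := by
    intro i
    have h1 : |w i| ≤ ∑ j : Fin m, |w j| :=
      Finset.single_le_sum (f := fun j => |w j|) (fun j _ => abs_nonneg _) (Finset.mem_univ i)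
    calc |x₁ + w i| ≤ |x₁| + |w i| := abs_add_le _ _
      _ ≤ R := by linarith
  have hdet : ∀ k : {k : Fin m → ℕ // StrictMono k},
      |Matrix.det (Matrix.of fun i j : Fin m => besselI (k.1 j) (x₁ + w i))| ^ 2
        ≤ K * ∏ i, g (k.1 i) := by
    intro k
    have hB : ∀ i j : Fin m,
        |(Matrix.of fun i j : Fin m => besselI (k.1 j) (x₁ + w i)) i j|
          ≤ Real.exp R * R ^ (k.1 j) / (k.1 j).factorial := by
      intro i j
      exact abs_besselI_le (k.1 j) hR.le (hx i)
    have h1 := abs_det_le (Matrix.of fun i j : Fin m => besselI (k.1 j) (x₁ + w i))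
      (fun j => Real.exp R * R ^ (k.1 j) / (k.1 j).factorial)
      (fun j => by positivity) hB
    have h2 : ((m.factorial : ℝ)) * ∏ j, Real.exp R * R ^ (k.1 j) / (k.1 j).factorial
        = (m.factorial : ℝ) * Real.exp R ^ m * ∏ j, R ^ (k.1 j) / (k.1 j).factorial := by
      rw [mul_assoc]
      congr 1
      calc (∏ j, Real.exp R * R ^ (k.1 j) / (k.1 j).factorial)
          = ∏ j, Real.exp R * (R ^ (k.1 j) / (k.1 j).factorial) := by
            apply Finset.prod_congr rfl; intro j _; ring
        _ = (∏ _j : Fin m, Real.exp R) * ∏ j, R ^ (k.1 j) / (k.1 j).factorial :=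
            Finset.prod_mul_distrib
        _ = Real.exp R ^ m * ∏ j, R ^ (k.1 j) / (k.1 j).factorial := by
            rw [Finset.prod_const, Finset.card_univ, Fintype.card_fin]
    calc |Matrix.det (Matrix.of fun i j : Fin m => besselI (k.1 j) (x₁ + w i))| ^ 2
        ≤ ((m.factorial : ℝ) * ∏ j, Real.exp R * R ^ (k.1 j) / (k.1 j).factorial) ^ 2 :=
          pow_le_pow_left₀ (abs_nonneg _) h1 2
      _ = K * ∏ i, g (k.1 i) := by
          rw [h2, hKdef, mul_pow, ← Finset.prod_pow]
  have hfull : Summable (fun k : Fin m → ℕ => K * ∏ i, g (k i)) := hS.mul_left K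
  have hsub : Summable (fun k : {k : Fin m → ℕ // StrictMono k} => K * ∏ i, g (k.1 i)) :=
    (hfull.subtype (setOf StrictMono)).congr (fun k => rfl)
  have hsummable : Summable (fun k : {k : Fin m → ℕ // StrictMono k} =>
      |Matrix.det (Matrix.of fun i j : Fin m => besselI (k.1 j) (x₁ + w i))| ^ 2) :=
    Summable.of_nonneg_of_le (fun k => pow_nonneg (abs_nonneg _) 2) hdet hsub
  refine ⟨hsummable, ?_⟩
  calc (∑' k : {k : Fin m → ℕ // StrictMono k},
        |Matrix.det (Matrix.of fun i j : Fin m => besselI (k.1 j) (x₁ + w i))| ^ 2)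
      ≤ ∑' k : {k : Fin m → ℕ // StrictMono k}, K * ∏ i, g (k.1 i) :=
        Summable.tsum_le_tsum hdet hsummable hsub
    _ ≤ ∑' k : Fin m → ℕ, K * ∏ i, g (k i) :=
        Summable.tsum_le_tsum_of_inj Subtype.val Subtype.val_injective
          (fun c _ => mul_nonneg hK0 (Finset.prod_nonneg fun i _ => hg0 _))
          (fun b => le_rfl) hsub hfull
    _ = K * T := by rw [tsum_mul_left]
    _ ≤ K * T + 1 := by linarith
end

section
/- Every generalized Vandermonde matrix (x_i^{y_j})_{i=1,…,m; j=1,…,n} with 0 < x₁ < ⋯ < x_m and 0 ≤ y₁ < y₂ < ⋯ < y_n (real exponents) is totally positive: all its minors of all orders are positive. -/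
/-!
A nonzero exponential polynomial `u ↦ ∑ j, c j * u ^ y j` with `p` distinct real exponents has
fewer than `p` positive roots: divide by `u ^ y 0` and differentiate, which kills one term, while
Rolle's theorem costs at most one root. Hence the matrices `(t a ^ e b)` with `t`, `e` strictly
increasing are all nonsingular. Deforming the exponents linearly to `0, 1, …, p - 1` keeps them
strictly increasing, so the determinant keeps its sign along the way and ends at a classical
Vandermonde determinant `∏ (t j - t i) > 0`.
-/

open Finset Set

lemma exists_strictMono_hasDerivAt_eq_zero {p : ℕ} {f f' : ℝ → ℝ} {t : Fin (p + 1) → ℝ}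
    (ht : StrictMono t) (hf : ∀ u ∈ Icc (t 0) (t (Fin.last p)), HasDerivAt f (f' u) u)
    (hft : ∀ i, f (t i) = 0) :
    ∃ u : Fin p → ℝ, StrictMono u ∧ (∀ i, u i ∈ Ioo (t i.castSucc) (t i.succ)) ∧
      ∀ i, f' (u i) = 0 := by
  have hsub : ∀ i : Fin p, Icc (t i.castSucc) (t i.succ) ⊆ Icc (t 0) (t (Fin.last p)) :=
    fun i => Icc_subset_Icc (ht.monotone (Fin.zero_le _)) (ht.monotone (Fin.le_last _))
  have hrolle : ∀ i : Fin p, ∃ u ∈ Ioo (t i.castSucc) (t i.succ), f' u = 0 := fun i =>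
    exists_hasDerivAt_eq_zero (ht Fin.castSucc_lt_succ)
      (fun u hu => (hf u (hsub i hu)).continuousAt.continuousWithinAt)
      ((hft _).trans (hft _).symm) (fun u hu => hf u (hsub i (Ioo_subset_Icc_self hu)))
  choose u hu hf'u using hrolle
  refine ⟨u, fun i j hij => ?_, hu, hf'u⟩
  calc u i < t i.succ := (hu i).2
    _ ≤ t j.castSucc := ht.monotone (Fin.succ_le_castSucc_iff.mpr hij)
    _ < u j := (hu j).1

lemma eq_zero_of_forall_sum_mul_rpow_eq_zero {p : ℕ} {y c t : Fin p → ℝ} (hy : StrictMono y)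
    (ht0 : ∀ i, 0 < t i) (ht : StrictMono t) (hsum : ∀ i, ∑ j, c j * t i ^ y j = 0) :
    c = 0 := by
  induction p with
  | zero => exact funext fun j => j.elim0
  | succ p ih =>
    set g : ℝ → ℝ := fun u => ∑ j, c j * u ^ (y j - y 0)
    have hg : ∀ u, 0 < u → HasDerivAt g (∑ j, c j * ((y j - y 0) * u ^ (y j - y 0 - 1))) u :=
      fun u hu => HasDerivAt.fun_sum fun j _ =>
        (Real.hasDerivAt_rpow_const (Or.inl hu.ne')).const_mul (c j)
    have hgt : ∀ i, g (t i) = 0 := fun i => by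
      have : g (t i) = (∑ j, c j * t i ^ y j) / t i ^ y 0 := by
        simp only [g, Finset.sum_div, Real.rpow_sub (ht0 i), mul_div_assoc]
      rw [this, hsum i, zero_div]
    obtain ⟨u, hu, hut, hg'u⟩ :=
      exists_strictMono_hasDerivAt_eq_zero ht (fun u hu => hg u ((ht0 0).trans_le hu.1)) hgt
    have htail : (fun j : Fin p => c j.succ * (y j.succ - y 0)) = 0 := by
      refine ih (y := fun j => y j.succ - y 0 - 1) (fun a b hab => ?_)
        (fun i => (ht0 _).trans ((ht.monotone (Fin.zero_le _)).trans_lt (hut i).1)) hu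
        (fun i => ?_)
      · simpa using hy (Fin.succ_lt_succ_iff.mpr hab)
      · simpa [Fin.sum_univ_succ, mul_assoc] using hg'u i
    have hcs : ∀ j : Fin p, c j.succ = 0 := fun j =>
      (mul_eq_zero.mp (congrFun htail j)).resolve_right (sub_ne_zero.mpr (hy j.succ_pos).ne')
    have hc0 : c 0 * t 0 ^ y 0 = 0 := by
      simpa [Fin.sum_univ_succ, hcs] using hsum 0
    funext j
    exact Fin.cases ((mul_eq_zero.mp hc0).resolve_right (Real.rpow_pos_of_pos (ht0 0) _).ne')
      hcs j

lemma det_of_rpow_ne_zero {p : ℕ} {t e : Fin p → ℝ} (ht0 : ∀ i, 0 < t i) (ht : StrictMono t)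
    (he : StrictMono e) : (Matrix.of fun a b => t a ^ e b).det ≠ 0 := by
  intro hdet
  obtain ⟨v, hv, hmul⟩ := Matrix.exists_mulVec_eq_zero_iff.mpr hdet
  refine hv (eq_zero_of_forall_sum_mul_rpow_eq_zero he ht0 ht fun i => ?_)
  simpa [Matrix.mulVec, dotProduct, mul_comm] using congrFun hmul i

lemma det_vandermonde_pos {R : Type*} [CommRing R] [LinearOrder R] [IsStrictOrderedRing R]
    {p : ℕ} {t : Fin p → R} (ht : StrictMono t) : 0 < (Matrix.vandermonde t).det := by
  rw [Matrix.det_vandermonde]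
  exact prod_pos fun i _ => prod_pos fun j hj => sub_pos.mpr (ht (mem_Ioi.mp hj))

lemma strictMono_one_sub_mul_add_mul {α : Type*} [PartialOrder α] {e f : α → ℝ} {s : ℝ}
    (he : StrictMono e) (hf : StrictMono f) (hs : s ∈ Icc (0 : ℝ) 1) :
    StrictMono fun b => (1 - s) * e b + s * f b := by
  rcases hs.2.lt_or_eq with hs1 | rfl
  · exact (he.const_mul (sub_pos.mpr hs1)).add_monotone (hf.monotone.const_mul hs.1)
  · simpa using hf

lemma det_of_rpow_pos {p : ℕ} {t e : Fin p → ℝ} (ht0 : ∀ i, 0 < t i) (ht : StrictMono t)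
    (he : StrictMono e) : 0 < (Matrix.of fun a b => t a ^ e b).det := by
  set F : ℝ → ℝ := fun s =>
    (Matrix.of fun a b : Fin p => t a ^ ((1 - s) * e b + s * (b : ℝ))).det
  have hF : Continuous F := Continuous.matrix_det <| continuous_pi fun a => continuous_pi
    fun b => continuous_const.rpow (by fun_prop) fun _ => Or.inl (ht0 a).ne'
  have hFne : ∀ s ∈ Icc (0 : ℝ) 1, F s ≠ 0 := fun s hs =>
    det_of_rpow_ne_zero ht0 ht (strictMono_one_sub_mul_add_mul he (Nat.strictMono_cast.comp Fin.val_strictMono) hs)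
  have hF1 : F 1 = (Matrix.vandermonde t).det := by
    refine congrArg Matrix.det (Matrix.ext fun a b => ?_)
    simp [← Real.rpow_natCast]
  have hF0 : F 0 = (Matrix.of fun a b => t a ^ e b).det := by simp [F]
  rw [← hF0]
  exact isPreconnected_Icc.lt_of_ne hF.continuousOn hFne
    ⟨1, right_mem_Icc.mpr zero_le_one, hF1 ▸ det_vandermonde_pos ht⟩
    (left_mem_Icc.mpr zero_le_one)

theorem generalized_vandermonde_totally_positive_general
    (m n : ℕ) (x : Fin m → ℝ) (y : Fin n → ℝ)
    (hx0 : ∀ i, 0 < x i) (hx : StrictMono x)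
    (hy : StrictMono y)
    (p : ℕ) (rows : Fin p → Fin m) (hrows : StrictMono rows)
    (cols : Fin p → Fin n) (hcols : StrictMono cols) :
    0 < Matrix.det (Matrix.of fun a b : Fin p => x (rows a) ^ y (cols b)) :=
  det_of_rpow_pos (fun a => hx0 (rows a)) (hx.comp hrows) (hy.comp hcols)

theorem generalized_vandermonde_totally_positive
    (m n : ℕ) (x : Fin m → ℝ) (y : Fin n → ℝ)
    (hx0 : ∀ i, 0 < x i) (hx : StrictMono x)
    (hy0 : ∀ j, 0 ≤ y j) (hy : StrictMono y)
    (p : ℕ) (rows : Fin p → Fin m) (hrows : StrictMono rows)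
    (cols : Fin p → Fin n) (hcols : StrictMono cols) :
    0 < Matrix.det (Matrix.of fun a b : Fin p => x (rows a) ^ y (cols b)) :=
  generalized_vandermonde_totally_positive_general m n x y hx0 hx hy p rows hrows cols hcols
end
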